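/- arXiv:1503.07598 — 3 statements merged into one kernel-verified Lean document; each statement's English description precedes it below -/
import Mathlib

section
/- Let A_ξ, A_η ∈ 𝔞 satisfy: (i) ⟨α, A_η⟩ ≤ 0 for every α ∈ Σ⁺ (i.e. −A_η lies in the closed positive Weyl chamber), and (ii) ⟨α, A_ξ⟩ ≥ 0 for every α ∈ Σ⁺ with ⟨α, A_η⟩ = 0. Then the subgroup U = {s ∈ W : s A_ξ = A_ξ and s A_η = A_η} of W is generated by the reflections s_{α_i} in those simple roots α_i satisfying ⟨α_i, A_ξ⟩ = 0 and ⟨α_i, A_η⟩ = 0. (This is Lemma 2 of the paper: the stabilizer in W of the complex point λ₀ = ξ₀ + iη₀ is generated by the reflections in the simple roots vanishing at A_{λ₀}.) -/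
/-!
Write an element `w` of the stabilizer as a word in the simple reflections (each reflection
`s_β` is `s_i s_γ s_i` with `γ = s_i β` of smaller height) and induct on the number `n(w)` of
positive roots that `w` makes negative.

If `n(w) = 0` then `w = 1`: writing `w = u s_k`, the word `u` makes `α_k` negative, so some
letter `s_j` of `u` is the first (from the right) to do so. The letters to its right carry `α_k`
to a positive root that `s_j` makes negative, i.e. to a multiple of `α_j`; hence `s_j` slides
through them and cancels `s_k`, which shortens the word.

If `n(w) > 0` then `w α_i < 0` for some simple root `α_i`. As `w` fixes `A_ξ` and `A_η`, the
hypotheses applied to the positive roots `α_i` and `-w α_i` force `⟨α_i, A_η⟩ = ⟨α_i, A_ξ⟩ = 0`,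
so `s_i` is one of the generators, and `w s_i` lies in the stabilizer with `n(w s_i) < n(w)`.
-/

open scoped RealInnerProductSpace

structure SimpleRootSystem (E ι : Type*) [NormedAddCommGroup E] [InnerProductSpace ℝ E]
    [Fintype ι] where
  roots : Finset E
  ne_zero : ∀ α ∈ roots, α ≠ 0
  refl : E → E ≃ₗᵢ[ℝ] E
  refl_apply : ∀ α ∈ roots, ∀ x, refl α x = x - (2 * ⟪x, α⟫ / ⟪α, α⟫) • α
  refl_mem : ∀ α ∈ roots, ∀ β ∈ roots, refl α β ∈ roots
  simple : ι → E
  simple_mem : ∀ i, simple i ∈ roots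
  linearIndependent_simple : LinearIndependent ℝ simple
  coeff : E → ι → ℤ
  eq_sum_coeff : ∀ α ∈ roots, α = ∑ i, (coeff α i : ℝ) • simple i
  coeff_nonneg_or_nonpos : ∀ α ∈ roots, (∀ i, 0 ≤ coeff α i) ∨ ∀ i, coeff α i ≤ 0

namespace SimpleRootSystem

variable {E ι : Type*} [NormedAddCommGroup E] [InnerProductSpace ℝ E] [Fintype ι]
  (R : SimpleRootSystem E ι) {α β γ : E}

section Reflections

theorem inner_self_pos (hα : α ∈ R.roots) : 0 < ⟪α, α⟫ :=
  real_inner_self_pos.2 (R.ne_zero α hα)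

theorem refl_apply_self (hα : α ∈ R.roots) : R.refl α α = -α := by
  rw [R.refl_apply α hα, mul_div_assoc, div_self (R.inner_self_pos hα).ne', mul_one, two_smul]
  abel

theorem refl_apply_of_inner_eq_zero (hα : α ∈ R.roots) {x : E} (hx : ⟪α, x⟫ = 0) :
    R.refl α x = x := by
  rw [R.refl_apply α hα, real_inner_comm, hx]
  simp

theorem refl_mul_self (hα : α ∈ R.roots) : R.refl α * R.refl α = 1 := by
  ext x
  have hαα := (R.inner_self_pos hα).ne'
  simp only [LinearIsometryEquiv.coe_mul, Function.comp_apply, LinearIsometryEquiv.coe_one,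
    id_eq, R.refl_apply α hα, inner_sub_left, real_inner_smul_left]
  rw [sub_sub, ← add_smul]
  field_simp
  ring_nf
  simp

theorem refl_refl_apply (hα : α ∈ R.roots) (x : E) : R.refl α (R.refl α x) = x :=
  DFunLike.congr_fun (R.refl_mul_self hα) x

theorem refl_mul_eq_mul_refl (hα : α ∈ R.roots) (hγ : γ ∈ R.roots) {g : E ≃ₗᵢ[ℝ] E} {c : ℝ}
    (hc : c ≠ 0) (hg : g γ = c • α) : R.refl α * g = g * R.refl γ := by
  ext x
  have hγγ := (R.inner_self_pos hγ).ne'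
  have hα' : α = c⁻¹ • g γ := by rw [hg, smul_smul, inv_mul_cancel₀ hc, one_smul]
  simp only [LinearIsometryEquiv.coe_mul, Function.comp_apply, R.refl_apply α hα,
    R.refl_apply γ hγ, map_sub, map_smul, hg, smul_smul]
  congr 2
  rw [hα']
  simp only [real_inner_smul_left, real_inner_smul_right, LinearIsometryEquiv.inner_map_map]
  field_simp

theorem refl_inv (hα : α ∈ R.roots) : (R.refl α)⁻¹ = R.refl α :=
  inv_eq_of_mul_eq_one_right (R.refl_mul_self hα)

theorem refl_smul (hα : α ∈ R.roots) {c : ℝ} (hc : c ≠ 0) (hcα : c • α ∈ R.roots) :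
    R.refl (c • α) = R.refl α := by
  simpa using R.refl_mul_eq_mul_refl hcα hα (g := 1) (inv_ne_zero hc) (by simp [smul_smul, hc])

theorem neg_mem_roots (hα : α ∈ R.roots) : -α ∈ R.roots :=
  R.refl_apply_self hα ▸ R.refl_mem α hα α hα

theorem refl_neg (hα : α ∈ R.roots) : R.refl (-α) = R.refl α := by
  simpa using R.refl_smul hα (c := -1) (by norm_num) (by simpa using R.neg_mem_roots hα)

end Reflections

section PositiveRoots

def IsPos (β : E) : Prop := β ∈ R.roots ∧ ∀ i, 0 ≤ R.coeff β i

theorem IsPos.mem (h : R.IsPos β) : β ∈ R.roots := h.1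

theorem coeff_eq_of_eq_sum (hβ : β ∈ R.roots) {c : ι → ℝ} (h : β = ∑ i, c i • R.simple i)
    (i : ι) : (R.coeff β i : ℝ) = c i :=
  Fintype.linearIndependent_iffₛ.1 R.linearIndependent_simple _ _
    ((R.eq_sum_coeff β hβ).symm.trans h) i

theorem isPos_of_eq_sum (hβ : β ∈ R.roots) {c : ι → ℝ} (h : β = ∑ i, c i • R.simple i)
    (hc : ∀ i, 0 ≤ c i) : R.IsPos β :=
  ⟨hβ, fun i => by exact_mod_cast (R.coeff_eq_of_eq_sum hβ h i).symm ▸ hc i⟩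

theorem isPos_simple (i : ι) : R.IsPos (R.simple i) := by
  classical
  refine R.isPos_of_eq_sum (R.simple_mem i) (c := Pi.single i 1) ?_ fun j => ?_
  · simp [Pi.single_apply]
  · rw [Pi.single_apply]; split_ifs <;> norm_num

theorem neg_eq_sum_neg_coeff (hβ : β ∈ R.roots) :
    -β = ∑ i, (-(R.coeff β i : ℝ)) • R.simple i := by
  conv_lhs => rw [R.eq_sum_coeff β hβ]
  simp [← Finset.sum_neg_distrib]

theorem isPos_or_isPos_neg (hβ : β ∈ R.roots) : R.IsPos β ∨ R.IsPos (-β) :=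
  (R.coeff_nonneg_or_nonpos β hβ).imp (fun h => ⟨hβ, h⟩) fun h =>
    R.isPos_of_eq_sum (R.neg_mem_roots hβ) (R.neg_eq_sum_neg_coeff hβ)
      fun i => by simpa using h i

theorem not_isPos_neg (hβ : R.IsPos β) : ¬R.IsPos (-β) := by
  intro hneg
  have hzero : ∀ i, (R.coeff β i : ℝ) = 0 := by
    intro i
    have h := R.coeff_eq_of_eq_sum hneg.mem (R.neg_eq_sum_neg_coeff hβ.mem) i
    have h₁ : (0 : ℝ) ≤ R.coeff β i := by exact_mod_cast hβ.2 i
    have h₂ : (0 : ℝ) ≤ R.coeff (-β) i := by exact_mod_cast hneg.2 i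
    linarith
  apply R.ne_zero β hβ.mem
  rw [R.eq_sum_coeff β hβ.mem]
  simp [hzero]

theorem isPos_smul (hβ : R.IsPos β) {c : ℝ} (hc : 0 < c) (hcβ : c • β ∈ R.roots) :
    R.IsPos (c • β) := by
  refine R.isPos_of_eq_sum hcβ (c := fun i => c * R.coeff β i) ?_
    fun i => mul_nonneg hc.le (by exact_mod_cast hβ.2 i)
  conv_lhs => rw [R.eq_sum_coeff β hβ.mem]
  simp [Finset.smul_sum, smul_smul]

theorem pos_of_isPos_of_eq_smul_simple (hβ : R.IsPos β) {c : ℝ} {i : ι}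
    (h : β = c • R.simple i) : 0 < c := by
  rcases lt_trichotomy c 0 with hc | rfl | hc
  · have hneg : -β = (-c) • R.simple i := by rw [h, neg_smul]
    exact absurd (hneg ▸ R.isPos_smul (R.isPos_simple i) (neg_pos.2 hc)
      (hneg ▸ R.neg_mem_roots hβ.mem)) (R.not_isPos_neg hβ)
  · exact absurd (by simpa using h) (R.ne_zero β hβ.mem)
  · exact hc

theorem exists_inner_simple_pos (hβ : R.IsPos β) : ∃ i, 0 < ⟪β, R.simple i⟫ := by
  by_contra! hle
  have hexpand : ⟪β, β⟫ = ∑ i, (R.coeff β i : ℝ) * ⟪β, R.simple i⟫ := by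
    nth_rewrite 2 [R.eq_sum_coeff β hβ.mem]
    simp [inner_sum, real_inner_smul_right]
  have : ⟪β, β⟫ ≤ 0 := hexpand ▸ Finset.sum_nonpos fun i _ =>
    mul_nonpos_of_nonneg_of_nonpos (by exact_mod_cast hβ.2 i) (hle i)
  exact (R.inner_self_pos hβ.mem).not_ge this

end PositiveRoots

section SimpleReflections

theorem coeff_refl_simple [DecidableEq ι] (hβ : β ∈ R.roots) (i j : ι) :
    (R.coeff (R.refl (R.simple i) β) j : ℝ) = R.coeff β j -
      if j = i then 2 * ⟪β, R.simple i⟫ / ⟪R.simple i, R.simple i⟫ else 0 := by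
  refine R.coeff_eq_of_eq_sum (R.refl_mem _ (R.simple_mem i) β hβ) (c := fun j => R.coeff β j -
    if j = i then 2 * ⟪β, R.simple i⟫ / ⟪R.simple i, R.simple i⟫ else 0) ?_ j
  rw [R.refl_apply _ (R.simple_mem i)]
  nth_rewrite 1 [R.eq_sum_coeff β hβ]
  simp [sub_smul, ite_smul]

theorem isPos_refl_simple (hβ : R.IsPos β) {i : ι} (hne : ∀ c : ℝ, β ≠ c • R.simple i) :
    R.IsPos (R.refl (R.simple i) β) := by
  classical
  have hmem := R.refl_mem _ (R.simple_mem i) β hβ.mem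
  refine (R.coeff_nonneg_or_nonpos _ hmem).elim (fun h => ⟨hmem, h⟩) fun hnonpos => ?_
  have hzero : ∀ j ≠ i, (R.coeff β j : ℝ) • R.simple j = 0 := by
    intro j hj
    have h₁ : (R.coeff β j : ℝ) ≤ 0 := by
      simpa [R.coeff_refl_simple hβ.mem, hj] using (Int.cast_nonpos.2 (hnonpos j) : _ ≤ (0 : ℝ))
    have h₂ : (0 : ℝ) ≤ R.coeff β j := by exact_mod_cast hβ.2 j
    rw [le_antisymm h₁ h₂, zero_smul]
  refine absurd ?_ (hne (R.coeff β i))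
  conv_lhs => rw [R.eq_sum_coeff β hβ.mem]
  exact Finset.sum_eq_single i (fun j _ hj => hzero j hj) (by simp)

def height (β : E) : ℤ := ∑ i, R.coeff β i

theorem height_nonneg (hβ : R.IsPos β) : 0 ≤ R.height β :=
  Finset.sum_nonneg fun i _ => hβ.2 i

theorem height_refl_simple_lt (hβ : β ∈ R.roots) {i : ι} (hi : 0 < ⟪β, R.simple i⟫) :
    R.height (R.refl (R.simple i) β) < R.height β := by
  classical
  have hstep : 0 < 2 * ⟪β, R.simple i⟫ / ⟪R.simple i, R.simple i⟫ :=
    div_pos (mul_pos two_pos hi) (R.inner_self_pos (R.simple_mem i))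
  have hheight : (R.height (R.refl (R.simple i) β) : ℝ) =
      R.height β - 2 * ⟪β, R.simple i⟫ / ⟪R.simple i, R.simple i⟫ := by
    simp [height, R.coeff_refl_simple hβ, Finset.sum_sub_distrib]
  exact_mod_cast (by linarith : (R.height (R.refl (R.simple i) β) : ℝ) < R.height β)

end SimpleReflections

section Words

def reflWord (L : List ι) : E ≃ₗᵢ[ℝ] E := (L.map fun i => R.refl (R.simple i)).prod

@[simp]
theorem reflWord_nil : R.reflWord [] = 1 := rfl

@[simp]
theorem reflWord_cons (i : ι) (L : List ι) :
    R.reflWord (i :: L) = R.refl (R.simple i) * R.reflWord L := by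
  simp [reflWord]

@[simp]
theorem reflWord_append (L₁ L₂ : List ι) :
    R.reflWord (L₁ ++ L₂) = R.reflWord L₁ * R.reflWord L₂ := by
  simp [reflWord]

theorem reflWord_mem_roots (L : List ι) : ∀ β ∈ R.roots, R.reflWord L β ∈ R.roots := by
  induction L with
  | nil => exact fun β hβ => hβ
  | cons i L ih => exact fun β hβ => R.refl_mem _ (R.simple_mem i) _ (ih β hβ)

theorem exists_reflWord_eq_refl_of_isPos (hβ : R.IsPos β) : ∃ L, R.reflWord L = R.refl β := by
  obtain ⟨n, hn⟩ : ∃ n, (R.height β).toNat = n := ⟨_, rfl⟩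
  induction n using Nat.strong_induction_on generalizing β with
  | _ n ih =>
  by_cases hsimple : ∃ i, ∃ c : ℝ, β = c • R.simple i
  · obtain ⟨i, c, rfl⟩ := hsimple
    have hc : c ≠ 0 := by
      rintro rfl
      exact R.ne_zero _ hβ.mem (zero_smul ℝ _)
    exact ⟨[i], by simpa using (R.refl_smul (R.simple_mem i) hc hβ.mem).symm⟩
  push Not at hsimple
  obtain ⟨i, hi⟩ := R.exists_inner_simple_pos hβ
  set γ := R.refl (R.simple i) β
  have hγ : R.IsPos γ := R.isPos_refl_simple hβ (hsimple i)
  have hdec := R.height_refl_simple_lt hβ.mem hi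
  have hlt : (R.height γ).toNat < n :=
    hn ▸ (Int.toNat_lt_toNat ((R.height_nonneg hγ).trans_lt hdec)).2 hdec
  obtain ⟨L, hL⟩ := ih _ hlt hγ rfl
  have hconj := R.refl_mul_eq_mul_refl hβ.mem hγ.mem (g := R.refl (R.simple i)) one_ne_zero
    (by rw [one_smul, R.refl_refl_apply (R.simple_mem i)])
  refine ⟨i :: L ++ [i], ?_⟩
  rw [reflWord_append, reflWord_cons, hL, ← hconj]
  simp [mul_assoc, R.refl_mul_self (R.simple_mem i)]

theorem exists_reflWord_eq_refl (hβ : β ∈ R.roots) : ∃ L, R.reflWord L = R.refl β :=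
  (R.isPos_or_isPos_neg hβ).elim R.exists_reflWord_eq_refl_of_isPos fun h =>
    R.refl_neg hβ ▸ R.exists_reflWord_eq_refl_of_isPos h

def weylGroup : Subgroup (E ≃ₗᵢ[ℝ] E) := Subgroup.closure {g | ∃ α ∈ R.roots, g = R.refl α}

theorem exists_reflWord_eq_of_mem_weylGroup {w : E ≃ₗᵢ[ℝ] E} (hw : w ∈ R.weylGroup) :
    ∃ L, R.reflWord L = w := by
  induction hw using Subgroup.closure_induction'' with
  | mem _ h =>
    obtain ⟨α, hα, rfl⟩ := h
    exact R.exists_reflWord_eq_refl hα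
  | inv_mem _ h =>
    obtain ⟨α, hα, rfl⟩ := h
    exact R.refl_inv hα ▸ R.exists_reflWord_eq_refl hα
  | one => exact ⟨[], rfl⟩
  | mul _ _ _ _ hx hy =>
    obtain ⟨L₁, rfl⟩ := hx
    obtain ⟨L₂, rfl⟩ := hy
    exact ⟨L₁ ++ L₂, R.reflWord_append L₁ L₂⟩

end Words

section Deletion

theorem exists_eq_append_cons_of_not_isPos (hβ : R.IsPos β) (L : List ι)
    (hL : ¬R.IsPos (R.reflWord L β)) :
    ∃ L₁ j L₂, ∃ c : ℝ, L = L₁ ++ j :: L₂ ∧ R.reflWord L₂ β = c • R.simple j := by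
  induction L with
  | nil => exact absurd hβ hL
  | cons j L ih =>
    by_cases hpos : R.IsPos (R.reflWord L β)
    · obtain ⟨c, hc⟩ : ∃ c : ℝ, R.reflWord L β = c • R.simple j := by
        by_contra! hne
        exact hL (by simpa using R.isPos_refl_simple hpos hne)
      exact ⟨[], j, L, c, rfl, hc⟩
    · obtain ⟨L₁, k, L₂, c, rfl, hc⟩ := ih hpos
      exact ⟨j :: L₁, k, L₂, c, rfl, hc⟩

theorem reflWord_eq_one_of_forall_isPos (L : List ι)
    (hL : ∀ β, R.IsPos β → R.IsPos (R.reflWord L β)) : R.reflWord L = 1 := by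
  induction h : L.length using Nat.strong_induction_on generalizing L with
  | _ n ih =>
  rcases L.eq_nil_or_concat' with rfl | ⟨L', k, rfl⟩
  · rfl
  have hk : ¬R.IsPos (R.reflWord L' (R.simple k)) := by
    intro hpos
    refine R.not_isPos_neg hpos ?_
    simpa [R.refl_apply_self (R.simple_mem k)] using hL _ (R.isPos_simple k)
  obtain ⟨L₁, j, L₂, c, rfl, hc⟩ :=
    R.exists_eq_append_cons_of_not_isPos (R.isPos_simple k) L' hk
  have hc0 : c ≠ 0 := by
    rintro rfl
    exact R.ne_zero _ (R.simple_mem k) (by simpa using hc)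
  have hswap : R.refl (R.simple j) * R.reflWord L₂ = R.reflWord L₂ * R.refl (R.simple k) :=
    R.refl_mul_eq_mul_refl (R.simple_mem j) (R.simple_mem k) hc0 hc
  have hshort : R.reflWord (L₁ ++ j :: L₂ ++ [k]) = R.reflWord (L₁ ++ L₂) := by
    simp only [reflWord_append, reflWord_cons, reflWord_nil, mul_one]
    rw [mul_assoc, hswap, mul_assoc, R.refl_mul_self (R.simple_mem k), mul_one]
  rw [hshort] at hL ⊢
  exact ih _ (by simp at h ⊢; omega) _ hL rfl

end Deletion

section Inversions

theorem isPos_apply_of_forall_isPos_apply_simple {w : E ≃ₗᵢ[ℝ] E}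
    (hw : ∀ β ∈ R.roots, w β ∈ R.roots) (h : ∀ i, R.IsPos (w (R.simple i)))
    (hβ : R.IsPos β) : R.IsPos (w β) := by
  refine R.isPos_of_eq_sum (hw β hβ.mem)
    (c := fun j => ∑ i, (R.coeff β i : ℝ) * R.coeff (w (R.simple i)) j) ?_
    fun j => Finset.sum_nonneg fun i _ =>
      mul_nonneg (by exact_mod_cast hβ.2 i) (by exact_mod_cast (h i).2 j)
  conv_lhs => rw [R.eq_sum_coeff β hβ.mem]
  simp only [map_sum, map_smul]
  conv_lhs => enter [2, i]; rw [R.eq_sum_coeff _ (h i).mem]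
  simp only [Finset.smul_sum, smul_smul, Finset.sum_smul]
  exact Finset.sum_comm

open Classical in
noncomputable def inversionSet (w : E ≃ₗᵢ[ℝ] E) : Finset E :=
  R.roots.filter fun β => (∀ i, 0 ≤ R.coeff β i) ∧ ¬R.IsPos (w β)

theorem mem_inversionSet {w : E ≃ₗᵢ[ℝ] E} :
    β ∈ R.inversionSet w ↔ R.IsPos β ∧ ¬R.IsPos (w β) := by
  classical
  rw [inversionSet, Finset.mem_filter, ← and_assoc]
  rfl

theorem card_inversionSet_mul_refl_simple_lt {w : E ≃ₗᵢ[ℝ] E}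
    (hw : ∀ β ∈ R.roots, w β ∈ R.roots) {i : ι} (hi : ¬R.IsPos (w (R.simple i))) :
    (R.inversionSet (w * R.refl (R.simple i))).card < (R.inversionSet w).card := by
  classical
  set s := R.refl (R.simple i)
  have hneg : R.IsPos (-w (R.simple i)) :=
    (R.isPos_or_isPos_neg (hw _ (R.simple_mem i))).resolve_left hi
  have hsub : (R.inversionSet (w * s)).image s ⊆ (R.inversionSet w).erase (R.simple i) := by
    intro x hx
    obtain ⟨β, hβ, rfl⟩ := Finset.mem_image.1 hx
    obtain ⟨hβpos, hwsβ⟩ := R.mem_inversionSet.1 hβ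
    have hne : ∀ c : ℝ, β ≠ c • R.simple i := by
      rintro c rfl
      have hws : (w * s) (c • R.simple i) = c • -w (R.simple i) := by
        simp [s, R.refl_apply_self (R.simple_mem i)]
      refine hwsβ (hws ▸ R.isPos_smul hneg (R.pos_of_isPos_of_eq_smul_simple hβpos rfl) ?_)
      exact hws ▸ hw _ (R.refl_mem _ (R.simple_mem i) _ hβpos.mem)
    refine Finset.mem_erase.2
      ⟨fun hsβ => ?_, R.mem_inversionSet.2 ⟨R.isPos_refl_simple hβpos hne, hwsβ⟩⟩
    have : β = -R.simple i :=
      calc β = s (s β) := (R.refl_refl_apply (R.simple_mem i) β).symm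
        _ = -R.simple i := by rw [hsβ, R.refl_apply_self (R.simple_mem i)]
    exact R.not_isPos_neg (R.isPos_simple i) (this ▸ hβpos)
  calc (R.inversionSet (w * s)).card = ((R.inversionSet (w * s)).image s).card :=
        (Finset.card_image_of_injective _ s.injective).symm
    _ ≤ ((R.inversionSet w).erase (R.simple i)).card := Finset.card_le_card hsub
    _ < (R.inversionSet w).card :=
        Finset.card_erase_lt_of_mem (R.mem_inversionSet.2 ⟨R.isPos_simple i, hi⟩)

end Inversions

section Stabilizer

variable {Aξ Aη : E}

theorem inner_eq_zero_of_not_isPos_apply (hη : ∀ α, R.IsPos α → ⟪α, Aη⟫ ≤ 0)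
    (hξ : ∀ α, R.IsPos α → ⟪α, Aη⟫ = 0 → 0 ≤ ⟪α, Aξ⟫) {w : E ≃ₗᵢ[ℝ] E} (hwξ : w Aξ = Aξ)
    (hwη : w Aη = Aη) (hα : R.IsPos α) (hwα : w α ∈ R.roots) (hneg : ¬R.IsPos (w α)) :
    ⟪α, Aξ⟫ = 0 ∧ ⟪α, Aη⟫ = 0 := by
  have hneg' : R.IsPos (-w α) := (R.isPos_or_isPos_neg hwα).resolve_left hneg
  have hinner : ∀ A, w A = A → ⟪-w α, A⟫ = -⟪α, A⟫ := fun A hA => by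
    conv_lhs => rw [← hA]
    rw [inner_neg_left, LinearIsometryEquiv.inner_map_map]
  have hη0 : ⟪α, Aη⟫ = 0 :=
    le_antisymm (hη α hα) (by linarith [hη _ hneg', hinner Aη hwη])
  have hξneg : 0 ≤ ⟪-w α, Aξ⟫ := hξ _ hneg' (by rw [hinner Aη hwη, hη0, neg_zero])
  exact ⟨le_antisymm (by linarith [hinner Aξ hwξ]) (hξ α hα hη0), hη0⟩

theorem reflWord_mem_closure_of_apply_eq (hη : ∀ α, R.IsPos α → ⟪α, Aη⟫ ≤ 0)
    (hξ : ∀ α, R.IsPos α → ⟪α, Aη⟫ = 0 → 0 ≤ ⟪α, Aξ⟫) (L : List ι)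
    (hLξ : R.reflWord L Aξ = Aξ) (hLη : R.reflWord L Aη = Aη) :
    R.reflWord L ∈ Subgroup.closure {g | ∃ i, ⟪R.simple i, Aξ⟫ = 0 ∧ ⟪R.simple i, Aη⟫ = 0 ∧
      g = R.refl (R.simple i)} := by
  induction h : (R.inversionSet (R.reflWord L)).card using Nat.strong_induction_on
    generalizing L with
  | _ n ih =>
  by_cases hpos : ∀ i, R.IsPos (R.reflWord L (R.simple i))
  · rw [R.reflWord_eq_one_of_forall_isPos L fun β =>
      R.isPos_apply_of_forall_isPos_apply_simple (R.reflWord_mem_roots L) hpos]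
    exact one_mem _
  push Not at hpos
  obtain ⟨i, hi⟩ := hpos
  have hroots := R.reflWord_mem_roots L
  obtain ⟨hiξ, hiη⟩ := R.inner_eq_zero_of_not_isPos_apply hη hξ hLξ hLη (R.isPos_simple i)
    (hroots _ (R.simple_mem i)) hi
  have hfix : ∀ A, ⟪R.simple i, A⟫ = 0 → R.reflWord (L ++ [i]) A = R.reflWord L A :=
    fun A hA => by simp [R.refl_apply_of_inner_eq_zero (R.simple_mem i) hA]
  have hlt : (R.inversionSet (R.reflWord (L ++ [i]))).card < n := by
    simpa [h] using R.card_inversionSet_mul_refl_simple_lt hroots hi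
  have hmem := ih _ hlt (L ++ [i]) ((hfix _ hiξ).trans hLξ) ((hfix _ hiη).trans hLη) rfl
  have hcancel : R.reflWord L = R.reflWord (L ++ [i]) * R.refl (R.simple i) := by
    simp [mul_assoc, R.refl_mul_self (R.simple_mem i)]
  rw [hcancel]
  exact mul_mem hmem (Subgroup.subset_closure ⟨i, hiξ, hiη, rfl⟩)

end Stabilizer

end SimpleRootSystem

theorem LinearIsometryEquiv.apply_eq_of_mem_closure {E : Type*} [NormedAddCommGroup E]
    [InnerProductSpace ℝ E] {S : Set (E ≃ₗᵢ[ℝ] E)} {x : E} (hS : ∀ g ∈ S, g x = x)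
    {g : E ≃ₗᵢ[ℝ] E} (hg : g ∈ Subgroup.closure S) : g x = x := by
  induction hg using Subgroup.closure_induction with
  | mem g hg => exact hS g hg
  | one => rfl
  | mul g h _ _ hg hh => simp [hg, hh]
  | inv g _ hg => simpa using (congrArg (⇑g⁻¹) hg).symm

theorem stabilizer_generated_by_simple_reflections_general
    {E : Type*} [NormedAddCommGroup E] [InnerProductSpace ℝ E]
    -- the root system `Σ`
    (Sig : Finset E)
    (hSig_ne : ∀ α ∈ Sig, α ≠ (0 : E))
    -- the reflections `s_α(x) = x - (2⟪x,α⟫/⟪α,α⟫) α`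
    (refl : E → (E ≃ₗᵢ[ℝ] E))
    (hrefl : ∀ α ∈ Sig, ∀ x : E, refl α x = x - (2 * ⟪x, α⟫ / ⟪α, α⟫) • α)
    (hrefl_maps : ∀ α ∈ Sig, ∀ β ∈ Sig, refl α β ∈ Sig)
    -- the Weyl group `W`
    (W : Subgroup (E ≃ₗᵢ[ℝ] E))
    (hW : W = Subgroup.closure {g : E ≃ₗᵢ[ℝ] E | ∃ α ∈ Sig, g = refl α})
    -- the simple roots `α₁, …, α_ℓ`
    {l : ℕ} (a : Fin l → E)
    (ha_mem : ∀ i, a i ∈ Sig)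
    (ha_indep : LinearIndependent ℝ a)
    -- integer coefficients of roots w.r.t. the simple roots, all `≥ 0` or all `≤ 0`
    (coeff : E → Fin l → ℤ)
    (hcoeff : ∀ α ∈ Sig, α = ∑ i, (coeff α i : ℝ) • a i ∧
        ((∀ i, 0 ≤ coeff α i) ∨ (∀ i, coeff α i ≤ 0)))
    -- the positive roots `Σ⁺`
    (Sigplus : Finset E)
    (hSigplus : ∀ α : E, α ∈ Sigplus ↔ α ∈ Sig ∧ ∀ i, 0 ≤ coeff α i)
    (Aξ Aη : E)
    (hη : ∀ α ∈ Sigplus, ⟪α, Aη⟫ ≤ 0)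
    (hξ : ∀ α ∈ Sigplus, ⟪α, Aη⟫ = 0 → 0 ≤ ⟪α, Aξ⟫) :
    {s : E ≃ₗᵢ[ℝ] E | s ∈ W ∧ s Aξ = Aξ ∧ s Aη = Aη} =
      (Subgroup.closure {g : E ≃ₗᵢ[ℝ] E |
          ∃ i : Fin l, ⟪a i, Aξ⟫ = 0 ∧ ⟪a i, Aη⟫ = 0 ∧ g = refl (a i)} :
        Subgroup (E ≃ₗᵢ[ℝ] E)) := by
  let R : SimpleRootSystem E (Fin l) := ⟨Sig, hSig_ne, refl, hrefl, hrefl_maps, a, ha_mem,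
    ha_indep, coeff, fun α hα => (hcoeff α hα).1, fun α hα => (hcoeff α hα).2⟩
  have hpos : ∀ α, R.IsPos α → α ∈ Sigplus := fun α hα => (hSigplus α).2 hα
  ext g
  refine ⟨fun ⟨hgW, hgξ, hgη⟩ => ?_, fun hg => ⟨?_, ?_, ?_⟩⟩
  · obtain ⟨L, rfl⟩ := R.exists_reflWord_eq_of_mem_weylGroup (hW ▸ hgW)
    exact R.reflWord_mem_closure_of_apply_eq (fun α hα => hη α (hpos α hα))
      (fun α hα => hξ α (hpos α hα)) L hgξ hgη
  · exact hW ▸ Subgroup.closure_mono (by rintro _ ⟨i, -, -, rfl⟩; exact ⟨a i, ha_mem i, rfl⟩) hg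
  · refine LinearIsometryEquiv.apply_eq_of_mem_closure ?_ hg
    rintro _ ⟨i, hi, -, rfl⟩
    exact R.refl_apply_of_inner_eq_zero (ha_mem i) hi
  · refine LinearIsometryEquiv.apply_eq_of_mem_closure ?_ hg
    rintro _ ⟨i, -, hi, rfl⟩
    exact R.refl_apply_of_inner_eq_zero (ha_mem i) hi

/-- Lemma 2 of the paper: if `-A_η` lies in the closed positive Weyl chamber and
`⟪α, A_ξ⟫ ≥ 0` for every positive root `α` orthogonal to `A_η`, then the subgroup
`U = {s ∈ W : s A_ξ = A_ξ, s A_η = A_η}` of the Weyl group is generated by the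
reflections in those simple roots vanishing at both `A_ξ` and `A_η`. -/
theorem stabilizer_generated_by_simple_reflections
    {E : Type*} [NormedAddCommGroup E] [InnerProductSpace ℝ E] [FiniteDimensional ℝ E]
    -- the root system `Σ`
    (Sig : Finset E)
    (hSig_ne : ∀ α ∈ Sig, α ≠ (0 : E))
    (hSig_span : Submodule.span ℝ (Sig : Set E) = ⊤)
    -- the reflections `s_α(x) = x - (2⟪x,α⟫/⟪α,α⟫) α`
    (refl : E → (E ≃ₗᵢ[ℝ] E))
    (hrefl : ∀ α ∈ Sig, ∀ x : E, refl α x = x - (2 * ⟪x, α⟫ / ⟪α, α⟫) • α)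
    (hrefl_maps : ∀ α ∈ Sig, ∀ β ∈ Sig, refl α β ∈ Sig)
    (hcrys : ∀ α ∈ Sig, ∀ β ∈ Sig, ∃ m : ℤ, 2 * ⟪β, α⟫ / ⟪α, α⟫ = (m : ℝ))
    -- the Weyl group `W`
    (W : Subgroup (E ≃ₗᵢ[ℝ] E))
    (hW : W = Subgroup.closure {g : E ≃ₗᵢ[ℝ] E | ∃ α ∈ Sig, g = refl α})
    -- the simple roots `α₁, …, α_ℓ`
    {l : ℕ} (a : Fin l → E)
    (ha_mem : ∀ i, a i ∈ Sig)
    (ha_indep : LinearIndependent ℝ a)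
    (ha_span : Submodule.span ℝ (Set.range a) = ⊤)
    -- integer coefficients of roots w.r.t. the simple roots, all `≥ 0` or all `≤ 0`
    (coeff : E → Fin l → ℤ)
    (hcoeff : ∀ α ∈ Sig, α = ∑ i, (coeff α i : ℝ) • a i ∧
        ((∀ i, 0 ≤ coeff α i) ∨ (∀ i, coeff α i ≤ 0)))
    -- the positive roots `Σ⁺`
    (Sigplus : Finset E)
    (hSigplus : ∀ α : E, α ∈ Sigplus ↔ α ∈ Sig ∧ ∀ i, 0 ≤ coeff α i)
    (Aξ Aη : E)
    (hη : ∀ α ∈ Sigplus, ⟪α, Aη⟫ ≤ 0)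
    (hξ : ∀ α ∈ Sigplus, ⟪α, Aη⟫ = 0 → 0 ≤ ⟪α, Aξ⟫) :
    {s : E ≃ₗᵢ[ℝ] E | s ∈ W ∧ s Aξ = Aξ ∧ s Aη = Aη} =
      (Subgroup.closure {g : E ≃ₗᵢ[ℝ] E |
          ∃ i : Fin l, ⟪a i, Aξ⟫ = 0 ∧ ⟪a i, Aη⟫ = 0 ∧ g = refl (a i)} :
        Subgroup (E ≃ₗᵢ[ℝ] E)) :=
  stabilizer_generated_by_simple_reflections_general Sig hSig_ne refl hrefl hrefl_maps W hW a ha_mem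
    ha_indep coeff hcoeff Sigplus hSigplus Aξ Aη hη hξ
end

section
/- Let k₁, …, kₙ be pairwise distinct real numbers and p₁, …, pₙ polynomials with complex coefficients. If limsup_{t → +∞} |Σ_{r=1}^{n} e^{i k_r t} p_r(t)| = a is finite, then each p_r is a constant polynomial; and if moreover a = 0, then each p_r is the zero polynomial. -/
/-!
Write `F t = ∑ r, e^{i k_r t} p_r(t)`. If `F` is bounded and `d ≥ 1` is the largest degree,
then `F t / t^d → 0`, while `F t / t^d - ∑ r, c_r e^{i k_r t} → 0`, where `c_r` is the
coefficient of `X^d` in `p_r`. Everything thus reduces to the independence of exponentials at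
infinity: if `∑ r, c_r e^{i k_r t} → 0` then every `c_r` vanishes. This follows by induction on
the number of terms, since for `G t = ∑ r, c_r e^{i k_r t}` the function
`G (t + h) - e^{i k_s h} G t` kills the `s`-th term and multiplies
the `r`-th one by `e^{i k_r h} - e^{i k_s h}`, which is nonzero for `h = π / (k_r - k_s)`.
The case `a = 0` is the same argument with `d = 0`.
-/

open scoped ENNReal

open Filter Topology Bornology Complex Polynomial

namespace Polynomial

theorem eval_reflect_inv_mul_pow {𝕜 : Type*} [Field 𝕜] {p : 𝕜[X]} {d : ℕ}
    (hp : p.natDegree ≤ d) {x : 𝕜} (hx : x ≠ 0) :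
    (p.reflect d).eval x⁻¹ * x ^ d = p.eval x := by
  let := invertibleOfNonzero hx
  have := eval₂_reflect_mul_pow (RingHom.id 𝕜) x d p hp
  rwa [invOf_eq_inv] at this

theorem tendsto_eval_div_pow_cobounded {𝕜 : Type*} [NormedField 𝕜] {p : 𝕜[X]} {d : ℕ}
    (hp : p.natDegree ≤ d) :
    Tendsto (fun x => p.eval x / x ^ d) (cobounded 𝕜) (𝓝 (p.coeff d)) := by
  have hreflect : Tendsto (fun x : 𝕜 => (p.reflect d).eval x⁻¹) (cobounded 𝕜)
      (𝓝 (p.coeff d)) := by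
    simpa [Function.comp_def, ← coeff_zero_eq_eval_zero, coeff_reflect] using
      ((p.reflect d).continuous.tendsto 0).comp tendsto_inv₀_cobounded
  refine hreflect.congr' ?_
  filter_upwards [eventually_ne_cobounded 0] with x hx
  rw [← eval_reflect_inv_mul_pow hp hx, mul_div_cancel_right₀ _ (pow_ne_zero d hx)]

end Polynomial

theorem isBoundedUnder_norm_of_limsup_nnnorm_ne_top {α E : Type*} [SeminormedAddGroup E]
    {l : Filter α} {f : α → E} (h : limsup (fun x => (‖f x‖₊ : ℝ≥0∞)) l ≠ ∞) :
    IsBoundedUnder (· ≤ ·) l (fun x => ‖f x‖) := by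
  obtain ⟨b, hlt, hb⟩ := exists_between (lt_top_iff_ne_top.2 h)
  refine isBoundedUnder_of_eventually_le (a := b.toReal) ?_
  filter_upwards [eventually_lt_of_limsup_lt hlt] with x hx
  simpa using ENNReal.toReal_mono hb.ne hx.le

theorem tendsto_zero_of_limsup_nnnorm_eq_zero {α E : Type*} [SeminormedAddGroup E]
    {l : Filter α} {f : α → E} (h : limsup (fun x => (‖f x‖₊ : ℝ≥0∞)) l = 0) :
    Tendsto f l (𝓝 0) := by
  rw [tendsto_zero_iff_enorm_tendsto_zero]
  exact tendsto_of_le_liminf_of_limsup_le bot_le h.le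

theorem norm_exp_I_mul_ofReal_mul (a t : ℝ) : ‖exp (I * (a * t))‖ = 1 := by
  exact_mod_cast norm_exp_I_mul_ofReal (a * t)

theorem exists_exp_I_mul_ne {a b : ℝ} (hab : a ≠ b) :
    ∃ h : ℝ, exp (I * (a * h)) ≠ exp (I * (b * h)) := by
  have hab' : (a : ℂ) - b ≠ 0 := sub_ne_zero.2 (mod_cast hab)
  refine ⟨Real.pi / (a - b), fun heq => exp_ne_zero (I * (b * ↑(Real.pi / (a - b)))) ?_⟩
  have hhalf_turn :
      I * (a * ↑(Real.pi / (a - b))) = I * (b * ↑(Real.pi / (a - b))) + Real.pi * I := by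
    push_cast
    field_simp
    ring
  rw [hhalf_turn, exp_add, exp_pi_mul_I] at heq
  linear_combination -heq / 2

section ExpSums

variable {ι : Type*} {k : ι → ℝ} {S : Finset ι}

theorem tendsto_sum_exp_mul_shift_sub {c : ι → ℂ}
    (hc : Tendsto (fun t : ℝ => ∑ r ∈ S, exp (I * (k r * t)) * c r) atTop (𝓝 0))
    (s : ι) (h : ℝ) :
    Tendsto (fun t : ℝ => ∑ r ∈ S,
        exp (I * (k r * t)) * ((exp (I * (k r * h)) - exp (I * (k s * h))) * c r))
      atTop (𝓝 0) := by
  have hlim := (hc.comp (tendsto_atTop_add_const_right _ h tendsto_id)).sub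
    (hc.const_mul (exp (I * (k s * h))))
  rw [mul_zero, sub_zero] at hlim
  refine hlim.congr fun t => ?_
  simp only [Function.comp_apply, id, Finset.mul_sum, ← Finset.sum_sub_distrib]
  refine Finset.sum_congr rfl fun r _ => ?_
  rw [ofReal_add, mul_add, mul_add, exp_add]
  ring

theorem eq_zero_of_tendsto_sum_exp_mul (hk : Set.InjOn k S) {c : ι → ℂ}
    (hc : Tendsto (fun t : ℝ => ∑ r ∈ S, exp (I * (k r * t)) * c r) atTop (𝓝 0)) :
    ∀ r ∈ S, c r = 0 := by
  classical
  induction S using Finset.induction_on generalizing c with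
  | empty => simp
  | insert s S hs ih =>
    have hS : ∀ r ∈ S, c r = 0 := by
      intro r hr
      obtain ⟨h, hne⟩ := exists_exp_I_mul_ne <| hk.ne (Finset.mem_insert_of_mem hr)
        (Finset.mem_insert_self s S) (ne_of_mem_of_not_mem hr hs)
      have hshift := tendsto_sum_exp_mul_shift_sub hc s h
      simp only [Finset.sum_insert hs, sub_self, zero_mul, mul_zero, zero_add] at hshift
      exact (mul_eq_zero.1 (ih (hk.mono (Finset.subset_insert s S)) hshift r hr)).resolve_left
        (sub_ne_zero.2 hne)
    have hcs : c s = 0 := by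
      have hnorm : Tendsto (fun _ : ℝ => ‖c s‖) atTop (𝓝 0) := by
        refine (norm_zero (E := ℂ) ▸ hc.norm).congr fun t => ?_
        rw [Finset.sum_insert hs, Finset.sum_eq_zero fun r hr => by rw [hS r hr, mul_zero],
          add_zero, norm_mul, norm_exp_I_mul_ofReal_mul, one_mul]
      exact norm_eq_zero.1 (tendsto_nhds_unique tendsto_const_nhds hnorm)
    exact (Finset.forall_mem_insert _ _ _).2 ⟨hcs, hS⟩

theorem coeff_eq_zero_of_tendsto_sum_exp_mul_eval_div_pow (hk : Set.InjOn k S)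
    {p : ι → ℂ[X]} {d : ℕ} (hp : ∀ r ∈ S, (p r).natDegree ≤ d)
    (h : Tendsto
      (fun t : ℝ => (∑ r ∈ S, exp (I * (k r * t)) * (p r).eval (t : ℂ)) / (t : ℂ) ^ d)
      atTop (𝓝 0)) :
    ∀ r ∈ S, (p r).coeff d = 0 := by
  refine eq_zero_of_tendsto_sum_exp_mul hk ?_
  have herr : Tendsto (fun t : ℝ => ∑ r ∈ S,
        exp (I * (k r * t)) * ((p r).eval (t : ℂ) / (t : ℂ) ^ d - (p r).coeff d))
      atTop (𝓝 0) := by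
    rw [← Finset.sum_const_zero]
    refine tendsto_finsetSum _ fun r hr => isBoundedUnder_le_mul_tendsto_zero ?_ ?_
    · exact isBoundedUnder_of ⟨1, fun t => (norm_exp_I_mul_ofReal_mul (k r) t).le⟩
    · exact tendsto_sub_nhds_zero_iff.2 <|
        (tendsto_eval_div_pow_cobounded (hp r hr)).comp (RCLike.tendsto_ofReal_atTop_cobounded ℂ)
  rw [← sub_zero (0 : ℂ)]
  refine (h.sub herr).congr fun t => ?_
  simp only [Finset.sum_div, ← Finset.sum_sub_distrib, mul_div_assoc, mul_sub, sub_sub_cancel]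

theorem natDegree_eq_zero_of_isBoundedUnder_sum_exp_mul_eval (hk : Set.InjOn k S)
    {p : ι → ℂ[X]}
    (h : IsBoundedUnder (· ≤ ·) atTop
      (fun t : ℝ => ‖∑ r ∈ S, exp (I * (k r * t)) * (p r).eval (t : ℂ)‖)) :
    ∀ r ∈ S, (p r).natDegree = 0 := by
  by_contra! ⟨r₀, hr₀, hne⟩
  obtain ⟨r, hr, hmax⟩ := S.exists_max_image (fun r => (p r).natDegree) ⟨r₀, hr₀⟩
  have hd0 : (p r).natDegree ≠ 0 := fun h0 => hne (Nat.le_zero.1 (h0 ▸ hmax r₀ hr₀))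
  have hinv : Tendsto (fun t : ℝ => ((t : ℂ) ^ (p r).natDegree)⁻¹) atTop (𝓝 0) := by
    simpa [inv_pow, zero_pow hd0] using (tendsto_inv₀_cobounded.comp
      (RCLike.tendsto_ofReal_atTop_cobounded ℂ)).pow (p r).natDegree
  have hlead := coeff_eq_zero_of_tendsto_sum_exp_mul_eval_div_pow hk hmax
    (by simpa only [div_eq_inv_mul] using hinv.zero_mul_isBoundedUnder_le h) r hr
  rw [← leadingCoeff, leadingCoeff_eq_zero] at hlead
  exact hd0 (hlead ▸ natDegree_zero)

end ExpSums

/-- Harish-Chandra's elementary lemma: if `k₁, …, kₙ` are pairwise distinct real numbers,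
`p₁, …, pₙ` are complex polynomials, and the `limsup` as `t → +∞` of
`|Σ_r e^{i k_r t} p_r(t)|` equals a finite value `a`, then each `p_r` is constant;
and if moreover `a = 0`, then each `p_r` is the zero polynomial. -/
theorem const_of_limsup_exp_poly_sum_finite
    {n : ℕ} (k : Fin n → ℝ) (hk : Function.Injective k)
    (p : Fin n → Polynomial ℂ) (a : ℝ≥0∞) (ha : a ≠ ⊤)
    (hlimsup : Filter.limsup
        (fun t : ℝ =>
          (‖∑ r, Complex.exp (Complex.I * (k r * t)) * (p r).eval (t : ℂ)‖₊ : ℝ≥0∞))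
        Filter.atTop = a) :
    (∀ r, ∃ c : ℂ, p r = Polynomial.C c) ∧ (a = 0 → ∀ r, p r = 0) := by
  have hdeg : ∀ r, (p r).natDegree = 0 := fun r =>
    natDegree_eq_zero_of_isBoundedUnder_sum_exp_mul_eval hk.injOn
      (isBoundedUnder_norm_of_limsup_nnnorm_ne_top (hlimsup ▸ ha)) r (Finset.mem_univ r)
  refine ⟨fun r => ⟨_, eq_C_of_natDegree_eq_zero (hdeg r)⟩, fun ha0 r => ?_⟩
  have hcoeff := coeff_eq_zero_of_tendsto_sum_exp_mul_eval_div_pow hk.injOn (d := 0)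
    (fun r _ => (hdeg r).le)
    (by simpa using tendsto_zero_of_limsup_nnnorm_eq_zero (hlimsup.trans ha0)) r (Finset.mem_univ r)
  rw [eq_C_of_natDegree_eq_zero (hdeg r), hcoeff, map_zero]
end

section
/- Assume Σ is nonempty. Let A_ξ, A_η ∈ 𝔞 with −A_η lying in the open positive Weyl chamber 𝔞⁺ (the regular case). Then for every H₀ ∈ 𝔞⁺ the function of t > 0 given by t ↦ Σ_{s ∈ W} det(s) · exp( i t ⟨s A_ξ, H₀⟩ − t ⟨s A_η, H₀⟩ ) is unbounded on (0, ∞). (This is the regular case of the unboundedness of ζ_{λ₀}(H) = Σ_{s∈W} ε(s) e^{i⟨s A_{λ₀}, H⟩} / π(A_{λ₀}) for λ₀ = ξ₀ + iη₀ with η₀ regular: the term with s = e outweighs all the others along the ray t H₀ as t → +∞.) -/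
open scoped RealInnerProductSpace

open Filter Topology

/-!
Along the ray `t H₀` the term of `s` has modulus `|det s| exp (t ⟪s (-A_η), H₀⟫)`, and for `x, y`
in the open chamber `⟪s x, y⟫ < ⟪x, y⟫` whenever `s ≠ 1`. Indeed, a maximiser `s` of `⟪s x, y⟫`
over `W` cannot be improved by any `s_β s`, which puts `s x` into the chamber; an element of `W`
sending a chamber point into the chamber keeps every positive root positive, and the exchange
argument for words in the simple reflections shows that it is `1`. Moreover `⟪x, y⟫ > 0`: the
vector `∑_{s ∈ W} s x` is fixed by every reflection, hence orthogonal to all roots, hence `0`.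
So the term of `s = 1` grows at the strictly largest exponential rate `⟪-A_η, H₀⟫ > 0`.
-/

theorem tendsto_norm_sum_mul_exp_atTop {ι : Type*} (F : Finset ι) (d z : ι → ℂ) {i₀ : ι}
    (hi₀ : i₀ ∈ F) (hd : d i₀ ≠ 0) (hpos : 0 < (z i₀).re)
    (hlt : ∀ i ∈ F, i ≠ i₀ → (z i).re < (z i₀).re) :
    Tendsto (fun t : ℝ => ‖∑ i ∈ F, d i * Complex.exp (t * z i)‖) atTop atTop := by
  classical
  have hfactor : ∀ t : ℝ, ∑ i ∈ F, d i * Complex.exp (t * z i) =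
      Complex.exp (t * z i₀) * ∑ i ∈ F, d i * Complex.exp (t * (z i - z i₀)) := by
    intro t
    rw [Finset.mul_sum]
    refine Finset.sum_congr rfl fun i _ => ?_
    rw [mul_left_comm, ← Complex.exp_add]
    ring_nf
  have hterm : ∀ i ∈ F, Tendsto (fun t : ℝ => d i * Complex.exp (t * (z i - z i₀))) atTop
      (𝓝 (if i = i₀ then d i₀ else 0)) := by
    intro i hi
    split_ifs with h
    · simp [h]
    · have hre : Tendsto (fun t : ℝ => (t * (z i - z i₀)).re) atTop atBot := by
        simpa using tendsto_id.atTop_mul_const_of_neg (sub_neg.2 (hlt i hi h))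
      simpa using (Complex.tendsto_exp_nhds_zero_iff.2 hre).const_mul (d i)
  have hsum := tendsto_finsetSum F hterm
  rw [Finset.sum_ite_eq', if_pos hi₀] at hsum
  have hexp : Tendsto (fun t : ℝ => ‖Complex.exp (t * z i₀)‖) atTop atTop := by
    simpa [Complex.norm_exp] using tendsto_id.atTop_mul_const hpos
  simp_rw [hfactor, norm_mul]
  exact hexp.atTop_mul_pos (norm_pos_iff.2 hd) hsum.norm

structure RootSystemWithBase (E : Type*) [NormedAddCommGroup E] [InnerProductSpace ℝ E] where
  roots : Finset E
  ne_zero : ∀ α ∈ roots, α ≠ 0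
  span_eq_top : Submodule.span ℝ (roots : Set E) = ⊤
  refl : E → E ≃ₗᵢ[ℝ] E
  refl_apply : ∀ α ∈ roots, ∀ x, refl α x = x - (2 * ⟪x, α⟫ / ⟪α, α⟫) • α
  refl_mem : ∀ α ∈ roots, ∀ β ∈ roots, refl α β ∈ roots
  l : ℕ
  simple : Fin l → E
  simple_mem : ∀ i, simple i ∈ roots
  simple_indep : LinearIndependent ℝ simple
  coeff : E → Fin l → ℤ
  coeff_spec : ∀ α ∈ roots, α = ∑ i, (coeff α i : ℝ) • simple i ∧
    ((∀ i, 0 ≤ coeff α i) ∨ (∀ i, coeff α i ≤ 0))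

namespace RootSystemWithBase

variable {E : Type*} [NormedAddCommGroup E] [InnerProductSpace ℝ E] (S : RootSystemWithBase E)
  {α β : E}

def IsPos (α : E) : Prop := α ∈ S.roots ∧ ∀ i, 0 ≤ S.coeff α i

def chamber : Set E := {x | ∀ β, S.IsPos β → 0 < ⟪β, x⟫}

def weylGroup : Subgroup (E ≃ₗᵢ[ℝ] E) :=
  Subgroup.closure {g | ∃ α ∈ S.roots, g = S.refl α}

def height (α : E) : ℤ := ∑ i, S.coeff α i

def word (L : List (Fin S.l)) : E ≃ₗᵢ[ℝ] E := (L.map fun i => S.refl (S.simple i)).prod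

variable {S}

section Reflections

lemma inner_self_pos (hα : α ∈ S.roots) : 0 < ⟪α, α⟫ :=
  real_inner_self_pos.2 (S.ne_zero α hα)

lemma refl_apply_self (hα : α ∈ S.roots) : S.refl α α = -α := by
  rw [S.refl_apply α hα, mul_div_assoc, div_self (inner_self_pos hα).ne']
  module

lemma neg_mem (hα : α ∈ S.roots) : -α ∈ S.roots :=
  refl_apply_self hα ▸ S.refl_mem α hα α hα

lemma refl_ne_one (hα : α ∈ S.roots) : S.refl α ≠ 1 := by
  intro h
  have : ⟪S.refl α α, α⟫ = ⟪α, α⟫ := by rw [h]; rfl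
  rw [refl_apply_self hα, inner_neg_left] at this
  linarith [inner_self_pos hα]

lemma refl_mul_self (hα : α ∈ S.roots) : S.refl α * S.refl α = 1 := by
  ext x
  simp only [LinearIsometryEquiv.coe_mul, Function.comp_apply, LinearIsometryEquiv.coe_one,
    id_eq, S.refl_apply α hα, inner_sub_left, real_inner_smul_left,
    div_mul_cancel₀ _ (inner_self_pos hα).ne']
  module

lemma refl_smul (hα : α ∈ S.roots) {c : ℝ} (hc : c ≠ 0) (hcα : c • α ∈ S.roots) :
    S.refl (c • α) = S.refl α := by
  ext x
  rw [S.refl_apply _ hcα, S.refl_apply α hα, real_inner_smul_right, real_inner_smul_left,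
    real_inner_smul_right, smul_smul]
  congr 2
  field_simp

lemma refl_apply_mul_eq_mul_refl (hα : α ∈ S.roots) (u : E ≃ₗᵢ[ℝ] E) (hu : u α ∈ S.roots) :
    S.refl (u α) * u = u * S.refl α := by
  ext x
  simp only [LinearIsometryEquiv.coe_mul, Function.comp_apply, S.refl_apply _ hu,
    S.refl_apply α hα, map_sub, map_smul, LinearIsometryEquiv.inner_map_map]

end Reflections

section Coefficients

lemma coeff_eq_of_eq_sum (hα : α ∈ S.roots) {c : Fin S.l → ℝ}
    (h : α = ∑ i, c i • S.simple i) (i : Fin S.l) : (S.coeff α i : ℝ) = c i :=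
  Fintype.linearIndependent_iffₛ.1 S.simple_indep _ _ ((S.coeff_spec α hα).1.symm.trans h) i

lemma coeff_neg (hα : α ∈ S.roots) (i : Fin S.l) : S.coeff (-α) i = -S.coeff α i := by
  have h : -α = ∑ i, ((-S.coeff α i : ℤ) : ℝ) • S.simple i := by
    simp only [Int.cast_neg, neg_smul, Finset.sum_neg_distrib, ← (S.coeff_spec α hα).1]
  exact_mod_cast coeff_eq_of_eq_sum (neg_mem hα) h i

lemma isPos_or_isPos_neg (hα : α ∈ S.roots) : S.IsPos α ∨ S.IsPos (-α) := by
  refine (S.coeff_spec α hα).2.imp (fun h => ⟨hα, h⟩) fun h => ⟨neg_mem hα, fun i => ?_⟩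
  rw [coeff_neg hα]
  exact Int.neg_nonneg_of_nonpos (h i)

lemma not_isPos_neg (hα : S.IsPos α) : ¬S.IsPos (-α) := by
  intro hneg
  have hzero : ∀ i, S.coeff α i = 0 := fun i => by
    have := hneg.2 i
    rw [coeff_neg hα.1] at this
    exact le_antisymm (by omega) (hα.2 i)
  apply S.ne_zero α hα.1
  rw [(S.coeff_spec α hα.1).1]
  simp [hzero]

lemma isPos_simple (i : Fin S.l) : S.IsPos (S.simple i) := by
  refine ⟨S.simple_mem i, fun j => ?_⟩
  have h : S.simple i = ∑ j, (if j = i then (1 : ℝ) else 0) • S.simple j := by simp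
  have hcoeff : (0 : ℝ) ≤ S.coeff (S.simple i) j := by
    rw [coeff_eq_of_eq_sum (S.simple_mem i) h j]
    split_ifs <;> norm_num
  exact_mod_cast hcoeff

lemma coeff_refl_simple (hβ : β ∈ S.roots) (i j : Fin S.l) :
    (S.coeff (S.refl (S.simple i) β) j : ℝ) = S.coeff β j -
      if j = i then 2 * ⟪β, S.simple i⟫ / ⟪S.simple i, S.simple i⟫ else 0 := by
  refine coeff_eq_of_eq_sum (c := fun j => S.coeff β j -
    if j = i then 2 * ⟪β, S.simple i⟫ / ⟪S.simple i, S.simple i⟫ else 0)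
    (S.refl_mem _ (S.simple_mem i) β hβ) ?_ j
  simp only [sub_smul, ite_smul, zero_smul, Finset.sum_sub_distrib, Finset.sum_ite_eq',
    Finset.mem_univ, if_true, ← (S.coeff_spec β hβ).1]
  exact S.refl_apply _ (S.simple_mem i) β

/-- The root system may be non-reduced: besides `α_i` itself, its positive multiples are also
sent to negative roots by `s_i`. -/
lemma isPos_refl_simple_or_refl_eq (hβ : S.IsPos β) (i : Fin S.l) :
    S.IsPos (S.refl (S.simple i) β) ∨ S.refl β = S.refl (S.simple i) := by
  by_cases hex : ∃ j, j ≠ i ∧ 0 < S.coeff β j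
  · left
    obtain ⟨j, hji, hj⟩ := hex
    have hmem := S.refl_mem _ (S.simple_mem i) β hβ.1
    have hcoeff : S.coeff (S.refl (S.simple i) β) j = S.coeff β j := by
      have := coeff_refl_simple hβ.1 i j
      rw [if_neg hji, sub_zero] at this
      exact_mod_cast this
    refine ⟨hmem, (S.coeff_spec _ hmem).2.resolve_right fun h => ?_⟩
    have := h j
    omega
  · right
    push Not at hex
    have hβ_eq : β = (S.coeff β i : ℝ) • S.simple i := by
      conv_lhs => rw [(S.coeff_spec β hβ.1).1]
      exact Finset.sum_eq_single i (fun j _ hj => by simp [le_antisymm (hex j hj) (hβ.2 j)])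
        (by simp)
    have hc : (S.coeff β i : ℝ) ≠ 0 := by
      intro h
      exact S.ne_zero β hβ.1 (by rw [hβ_eq, h, zero_smul])
    rw [hβ_eq]
    exact refl_smul (S.simple_mem i) hc (hβ_eq ▸ hβ.1)

lemma height_nonneg (hα : S.IsPos α) : 0 ≤ S.height α :=
  Finset.sum_nonneg fun i _ => hα.2 i

lemma height_refl_simple_lt (hα : α ∈ S.roots) {i : Fin S.l} (hi : 0 < ⟪α, S.simple i⟫) :
    S.height (S.refl (S.simple i) α) < S.height α := by
  have hc : 0 < 2 * ⟪α, S.simple i⟫ / ⟪S.simple i, S.simple i⟫ :=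
    div_pos (by positivity) (inner_self_pos (S.simple_mem i))
  have hle : ∀ j, (S.coeff (S.refl (S.simple i) α) j : ℝ) ≤ S.coeff α j := fun j => by
    rw [coeff_refl_simple hα]
    split_ifs <;> linarith
  have hlt : (S.coeff (S.refl (S.simple i) α) i : ℝ) < S.coeff α i := by
    rw [coeff_refl_simple hα, if_pos rfl]
    linarith
  exact Finset.sum_lt_sum (fun j _ => by exact_mod_cast hle j)
    ⟨i, Finset.mem_univ i, by exact_mod_cast hlt⟩

lemma exists_inner_simple_pos (hα : S.IsPos α) : ∃ i, 0 < ⟪α, S.simple i⟫ := by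
  by_contra! hle
  have : ⟪α, α⟫ ≤ 0 := calc
    ⟪α, α⟫ = ⟪α, ∑ i, (S.coeff α i : ℝ) • S.simple i⟫ := by rw [← (S.coeff_spec α hα.1).1]
    _ = ∑ i, (S.coeff α i : ℝ) * ⟪α, S.simple i⟫ := by
      simp only [inner_sum, real_inner_smul_right]
    _ ≤ 0 := Finset.sum_nonpos fun i _ =>
      mul_nonpos_of_nonneg_of_nonpos (by exact_mod_cast hα.2 i) (hle i)
  linarith [inner_self_pos hα.1]

end Coefficients

section Words

lemma word_cons (i : Fin S.l) (L : List (Fin S.l)) :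
    S.word (i :: L) = S.refl (S.simple i) * S.word L := by
  simp [word]

lemma word_append (L L' : List (Fin S.l)) : S.word (L ++ L') = S.word L * S.word L' := by
  simp [word]

lemma word_singleton (i : Fin S.l) : S.word [i] = S.refl (S.simple i) := by
  simp [word]

lemma word_reverse (L : List (Fin S.l)) : S.word L.reverse = (S.word L)⁻¹ := by
  induction L with
  | nil => exact inv_one.symm
  | cons i L ih =>
    rw [List.reverse_cons, word_append, ih, word_singleton, word_cons, mul_inv_rev,
      inv_eq_of_mul_eq_one_right (refl_mul_self (S.simple_mem i))]

lemma word_apply_mem (L : List (Fin S.l)) (hα : α ∈ S.roots) : S.word L α ∈ S.roots := by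
  induction L with
  | nil => exact hα
  | cons i L ih => exact S.refl_mem _ (S.simple_mem i) _ ih

lemma exists_word_eq_refl_of_isPos (hα : S.IsPos α) : ∃ L, S.word L = S.refl α := by
  -- `s_α = s_i s_{s_i α} s_i`, and `s_i α` has smaller height when `⟪α, α_i⟫ > 0`.
  induction h : (S.height α).toNat using Nat.strong_induction_on generalizing α with
  | _ n ih =>
    obtain ⟨i, hi⟩ := exists_inner_simple_pos hα
    rcases isPos_refl_simple_or_refl_eq hα i with hpos | heq
    · have hlt : (S.height (S.refl (S.simple i) α)).toNat < n := by
        have := height_refl_simple_lt hα.1 hi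
        have := height_nonneg hpos
        omega
      obtain ⟨L, hL⟩ := ih _ hlt hpos rfl
      refine ⟨i :: L ++ [i], ?_⟩
      rw [List.cons_append, word_cons, word_append, word_singleton, hL,
        refl_apply_mul_eq_mul_refl hα.1 _ hpos.1, ← mul_assoc, refl_mul_self (S.simple_mem i),
        one_mul]
    · exact ⟨[i], by rw [word_singleton, heq]⟩

lemma exists_word_eq_refl (hα : α ∈ S.roots) : ∃ L, S.word L = S.refl α := by
  rcases isPos_or_isPos_neg hα with h | h
  · exact exists_word_eq_refl_of_isPos h
  · obtain ⟨L, hL⟩ := exists_word_eq_refl_of_isPos h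
    refine ⟨L, hL.trans ?_⟩
    simpa using refl_smul hα (c := -1) (by norm_num) (by simpa using neg_mem hα)

lemma exists_word_eq_mul_refl_simple (L : List (Fin S.l)) (i : Fin S.l)
    (h : ¬S.IsPos (S.word L (S.simple i))) :
    ∃ L', S.word L' = S.word L * S.refl (S.simple i) ∧ L'.length + 1 = L.length := by
  induction L with
  | nil => exact absurd (isPos_simple i) h
  | cons j L ih =>
    by_cases hβ : S.IsPos (S.word L (S.simple i))
    · have hrefl : S.refl (S.word L (S.simple i)) = S.refl (S.simple j) :=
        (isPos_refl_simple_or_refl_eq hβ j).resolve_left (by rwa [word_cons] at h)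
      refine ⟨L, ?_, rfl⟩
      rw [word_cons, ← hrefl, refl_apply_mul_eq_mul_refl (S.simple_mem i) _ hβ.1, mul_assoc,
        refl_mul_self (S.simple_mem i), mul_one]
    · obtain ⟨L', hL', hlen⟩ := ih hβ
      exact ⟨j :: L', by rw [word_cons, hL', word_cons, mul_assoc], by simp [hlen]⟩

lemma word_eq_one_of_forall_isPos (L : List (Fin S.l))
    (h : ∀ β, S.IsPos β → S.IsPos (S.word L β)) : S.word L = 1 := by
  induction hn : L.length using Nat.strong_induction_on generalizing L with
  | _ n ih =>
    obtain rfl | ⟨L₀, i, rfl⟩ := L.eq_nil_or_concat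
    · rfl
    have hword : S.word (L₀.concat i) = S.word L₀ * S.refl (S.simple i) := by
      rw [List.concat_eq_append, word_append, word_singleton]
    have hneg : ¬S.IsPos (S.word L₀ (S.simple i)) := by
      have : S.word L₀ (S.simple i) = -S.word (L₀.concat i) (S.simple i) := by
        rw [hword, LinearIsometryEquiv.coe_mul, Function.comp_apply,
          refl_apply_self (S.simple_mem i), map_neg, neg_neg]
      rw [this]
      exact not_isPos_neg (h _ (isPos_simple i))
    -- `w = w₀ s_i` sends `α_i` to a positive root, so `w₀ α_i` is negative and the exchange
    -- lemma writes `w` with one letter less.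
    obtain ⟨L', hL', hlen⟩ := exists_word_eq_mul_refl_simple L₀ i hneg
    rw [← hword] at hL'
    rw [← hL'] at h ⊢
    exact ih L'.length (by simp at hn; omega) L' h rfl

end Words

section WeylGroup

lemma refl_mem_weylGroup (hα : α ∈ S.roots) : S.refl α ∈ S.weylGroup :=
  Subgroup.subset_closure ⟨α, hα, rfl⟩

lemma exists_word_eq_of_mem_weylGroup {s : E ≃ₗᵢ[ℝ] E} (hs : s ∈ S.weylGroup) :
    ∃ L, S.word L = s := by
  induction hs using Subgroup.closure_induction with
  | mem s hs =>
    obtain ⟨α, hα, rfl⟩ := hs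
    exact exists_word_eq_refl hα
  | one => exact ⟨[], rfl⟩
  | mul s t _ _ hs ht =>
    obtain ⟨L, rfl⟩ := hs
    obtain ⟨L', rfl⟩ := ht
    exact ⟨L ++ L', word_append L L'⟩
  | inv s _ hs =>
    obtain ⟨L, rfl⟩ := hs
    exact ⟨L.reverse, word_reverse L⟩

lemma apply_mem_roots {s : E ≃ₗᵢ[ℝ] E} (hs : s ∈ S.weylGroup) (hα : α ∈ S.roots) :
    s α ∈ S.roots := by
  obtain ⟨L, rfl⟩ := exists_word_eq_of_mem_weylGroup hs
  exact word_apply_mem L hα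

lemma eq_one_of_forall_isPos {s : E ≃ₗᵢ[ℝ] E} (hs : s ∈ S.weylGroup)
    (h : ∀ β, S.IsPos β → S.IsPos (s β)) : s = 1 := by
  obtain ⟨L, rfl⟩ := exists_word_eq_of_mem_weylGroup hs
  exact word_eq_one_of_forall_isPos L h

end WeylGroup

section Chamber

variable {x y : E}

lemma inner_ne_zero_of_mem_chamber (hx : x ∈ S.chamber) (hα : α ∈ S.roots) : ⟪α, x⟫ ≠ 0 := by
  rcases isPos_or_isPos_neg hα with h | h
  · exact (hx α h).ne'
  · simpa [inner_neg_left] using (hx _ h).ne'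

lemma eq_one_of_apply_mem_chamber {s : E ≃ₗᵢ[ℝ] E} (hs : s ∈ S.weylGroup)
    (hx : x ∈ S.chamber) (hsx : s x ∈ S.chamber) : s = 1 := by
  refine eq_one_of_forall_isPos hs fun β hβ => ?_
  have hsβ := apply_mem_roots hs hβ.1
  refine (isPos_or_isPos_neg hsβ).resolve_right fun hneg => ?_
  have := hsx _ hneg
  rw [inner_neg_left, LinearIsometryEquiv.inner_map_map] at this
  linarith [hx β hβ]

lemma apply_mem_chamber_of_forall_inner_le {s : E ≃ₗᵢ[ℝ] E} (hs : s ∈ S.weylGroup)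
    (hx : x ∈ S.chamber) (hy : y ∈ S.chamber)
    (hmax : ∀ t ∈ S.weylGroup, ⟪t x, y⟫ ≤ ⟪s x, y⟫) : s x ∈ S.chamber := by
  -- Maximality against `s_β s` gives `⟪β, s x⟫ ≥ 0`, and `⟪β, s x⟫ = ⟪s⁻¹ β, x⟫ ≠ 0`.
  intro β hβ
  have hββ := inner_self_pos hβ.1
  have hle := hmax _ (mul_mem (refl_mem_weylGroup hβ.1) hs)
  rw [LinearIsometryEquiv.coe_mul, Function.comp_apply, S.refl_apply β hβ.1, inner_sub_left,
    real_inner_smul_left] at hle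
  have hnonneg : 0 ≤ ⟪β, s x⟫ := by
    have h : 0 ≤ 2 * ⟪s x, β⟫ / ⟪β, β⟫ := nonneg_of_mul_nonneg_left (by linarith) (hy β hβ)
    rw [le_div_iff₀ hββ, zero_mul] at h
    rw [real_inner_comm]
    linarith
  refine hnonneg.lt_of_ne fun h0 => ?_
  have hmem := apply_mem_roots (inv_mem hs) hβ.1
  refine inner_ne_zero_of_mem_chamber hx hmem ?_
  rw [← s.inner_map_map, LinearIsometryEquiv.inv_def, s.apply_symm_apply, h0]

lemma inner_apply_lt_of_mem_chamber (hfin : (S.weylGroup : Set (E ≃ₗᵢ[ℝ] E)).Finite)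
    (hx : x ∈ S.chamber) (hy : y ∈ S.chamber) {s : E ≃ₗᵢ[ℝ] E} (hs : s ∈ S.weylGroup)
    (hs1 : s ≠ 1) : ⟪s x, y⟫ < ⟪x, y⟫ := by
  obtain ⟨s₀, hs₀, hmax⟩ :=
    hfin.toFinset.exists_max_image (fun t => ⟪t x, y⟫) ⟨1, by simp [one_mem]⟩
  simp only [Set.Finite.mem_toFinset, SetLike.mem_coe] at hs₀ hmax
  obtain rfl : s₀ = 1 :=
    eq_one_of_apply_mem_chamber hs₀ hx (apply_mem_chamber_of_forall_inner_le hs₀ hx hy hmax)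
  refine (hmax s hs).lt_of_ne fun heq => hs1 ?_
  exact eq_one_of_apply_mem_chamber hs hx
    (apply_mem_chamber_of_forall_inner_le hs hx hy fun t ht => heq ▸ hmax t ht)

lemma sum_apply_eq_zero (hfin : (S.weylGroup : Set (E ≃ₗᵢ[ℝ] E)).Finite) (x : E) :
    ∑ s ∈ hfin.toFinset, s x = 0 := by
  set v := ∑ s ∈ hfin.toFinset, s x
  have hfixed : ∀ α ∈ S.roots, S.refl α v = v := fun α hα => by
    rw [map_sum]
    refine Finset.sum_equiv (Equiv.mulLeft (S.refl α)) (fun s => ?_) fun s _ => rfl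
    have hr := refl_mem_weylGroup hα
    simp only [Set.Finite.mem_toFinset, SetLike.mem_coe, Equiv.coe_mulLeft]
    exact ⟨fun h => mul_mem hr h, fun h => by simpa using mul_mem (inv_mem hr) h⟩
  have horth : ∀ α ∈ S.roots, ⟪v, α⟫ = 0 := fun α hα => by
    have h := hfixed α hα
    rw [S.refl_apply α hα, sub_eq_self] at h
    simpa [S.ne_zero α hα] using h
  have hspan : Submodule.span ℝ (S.roots : Set E) ≤ (ℝ ∙ v)ᗮ := Submodule.span_le.2
    fun α hα => Submodule.mem_orthogonal_singleton_iff_inner_right.2 (horth α hα)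
  rw [S.span_eq_top] at hspan
  exact inner_self_eq_zero.1
    (Submodule.mem_orthogonal_singleton_iff_inner_right.1 (hspan Submodule.mem_top))

lemma inner_pos_of_mem_chamber (hfin : (S.weylGroup : Set (E ≃ₗᵢ[ℝ] E)).Finite)
    (hne : S.roots.Nonempty) (hx : x ∈ S.chamber) (hy : y ∈ S.chamber) : 0 < ⟪x, y⟫ := by
  obtain ⟨α, hα⟩ := hne
  have hsum : ∑ s ∈ hfin.toFinset, ⟪s x, y⟫ = 0 := by
    rw [← sum_inner, sum_apply_eq_zero hfin, inner_zero_left]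
  have hlt : ∑ s ∈ hfin.toFinset, ⟪s x, y⟫ < ∑ s ∈ hfin.toFinset, ⟪x, y⟫ := by
    have hmem : ∀ {s}, s ∈ hfin.toFinset ↔ s ∈ S.weylGroup := by simp
    refine Finset.sum_lt_sum (fun s hs => ?_) ⟨S.refl α, hmem.2 (refl_mem_weylGroup hα), ?_⟩
    · rcases eq_or_ne s 1 with rfl | hs1
      · rfl
      · exact (inner_apply_lt_of_mem_chamber hfin hx hy (hmem.1 hs) hs1).le
    · exact inner_apply_lt_of_mem_chamber hfin hx hy (refl_mem_weylGroup hα) (refl_ne_one hα)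
  rw [hsum, Finset.sum_const, nsmul_eq_mul] at hlt
  exact pos_of_mul_pos_right hlt (Nat.cast_nonneg _)

end Chamber

end RootSystemWithBase

theorem regular_case_unbounded_general
    {E : Type*} [NormedAddCommGroup E] [InnerProductSpace ℝ E]
    -- the root system `Σ`
    (Sig : Finset E)
    (hSig_ne : ∀ α ∈ Sig, α ≠ (0 : E))
    (hSig_span : Submodule.span ℝ (Sig : Set E) = ⊤)
    -- the reflections `s_α(x) = x - (2⟪x,α⟫/⟪α,α⟫) α`
    (refl : E → (E ≃ₗᵢ[ℝ] E))
    (hrefl : ∀ α ∈ Sig, ∀ x : E, refl α x = x - (2 * ⟪x, α⟫ / ⟪α, α⟫) • α)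
    (hrefl_maps : ∀ α ∈ Sig, ∀ β ∈ Sig, refl α β ∈ Sig)
    -- the Weyl group `W`
    (W : Subgroup (E ≃ₗᵢ[ℝ] E))
    (hW : W = Subgroup.closure {g : E ≃ₗᵢ[ℝ] E | ∃ α ∈ Sig, g = refl α})
    -- the simple roots `α₁, …, α_ℓ`
    {l : ℕ} (a : Fin l → E)
    (ha_mem : ∀ i, a i ∈ Sig)
    (ha_indep : LinearIndependent ℝ a)
    -- integer coefficients of roots w.r.t. the simple roots, all `≥ 0` or all `≤ 0`
    (coeff : E → Fin l → ℤ)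
    (hcoeff : ∀ α ∈ Sig, α = ∑ i, (coeff α i : ℝ) • a i ∧
        ((∀ i, 0 ≤ coeff α i) ∨ (∀ i, coeff α i ≤ 0)))
    -- the positive roots `Σ⁺`
    (Sigplus : Finset E)
    (hSigplus : ∀ α : E, α ∈ Sigplus ↔ α ∈ Sig ∧ ∀ i, 0 ≤ coeff α i)
    (hSig_nonempty : Sig.Nonempty)
    (hW_fin : (W : Set (E ≃ₗᵢ[ℝ] E)).Finite)
    (Aξ Aη : E)
    (hη : ∀ α ∈ Sigplus, 0 < ⟪α, -Aη⟫) :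
    ∀ H₀ : E, (∀ α ∈ Sigplus, 0 < ⟪α, H₀⟫) →
      ∀ C : ℝ, ∃ t : ℝ, 0 < t ∧ C <
        ‖∑ s ∈ hW_fin.toFinset,
            ((LinearMap.det (s.toLinearEquiv : E →ₗ[ℝ] E) : ℝ) : ℂ) *
              Complex.exp (Complex.I * ((t * ⟪s Aξ, H₀⟫ : ℝ) : ℂ) - ((t * ⟪s Aη, H₀⟫ : ℝ) : ℂ))‖ := by
  intro H₀ hH₀ C
  subst hW
  let S : RootSystemWithBase E :=
    ⟨Sig, hSig_ne, hSig_span, refl, hrefl, hrefl_maps, l, a, ha_mem, ha_indep, coeff, hcoeff⟩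
  have hchamber : ∀ x : E, (∀ α ∈ Sigplus, 0 < ⟪α, x⟫) → x ∈ S.chamber :=
    fun x hx β hβ => hx β ((hSigplus β).2 hβ)
  have hdet : LinearMap.det ((1 : E ≃ₗᵢ[ℝ] E).toLinearEquiv : E →ₗ[ℝ] E) = 1 := LinearMap.det_id
  have hpos : 0 < ⟪-Aη, H₀⟫ :=
    S.inner_pos_of_mem_chamber hW_fin hSig_nonempty (hchamber _ hη) (hchamber _ hH₀)
  have hlt : ∀ s ∈ hW_fin.toFinset, s ≠ 1 → ⟪s (-Aη), H₀⟫ < ⟪-Aη, H₀⟫ := fun s hs hs1 =>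
    S.inner_apply_lt_of_mem_chamber hW_fin (hchamber _ hη) (hchamber _ hH₀)
      (hW_fin.mem_toFinset.1 hs) hs1
  have hlim := tendsto_norm_sum_mul_exp_atTop hW_fin.toFinset
    (fun s => ((LinearMap.det (s.toLinearEquiv : E →ₗ[ℝ] E) : ℝ) : ℂ))
    (fun s => Complex.I * ⟪s Aξ, H₀⟫ - ⟪s Aη, H₀⟫) (i₀ := 1) (by simp [one_mem])
    (by simp [hdet]) (by simpa using hpos) (by simpa using hlt)
  obtain ⟨t, hC, ht⟩ := ((hlim.eventually_gt_atTop C).and (eventually_gt_atTop 0)).exists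
  refine ⟨t, ht, hC.trans_eq ?_⟩
  congr 3 with s
  push_cast
  ring_nf

/-- The regular case of Lemma 3 of the paper: if `Σ ≠ ∅` and `-A_η` lies in the open
positive Weyl chamber, then for every `H₀` in the open positive Weyl chamber the function
`t ↦ Σ_{s ∈ W} det(s) exp(i t ⟪s A_ξ, H₀⟫ - t ⟪s A_η, H₀⟫)` is unbounded on `(0, ∞)`. -/
theorem regular_case_unbounded
    {E : Type*} [NormedAddCommGroup E] [InnerProductSpace ℝ E] [FiniteDimensional ℝ E]
    -- the root system `Σ`
    (Sig : Finset E)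
    (hSig_ne : ∀ α ∈ Sig, α ≠ (0 : E))
    (hSig_span : Submodule.span ℝ (Sig : Set E) = ⊤)
    -- the reflections `s_α(x) = x - (2⟪x,α⟫/⟪α,α⟫) α`
    (refl : E → (E ≃ₗᵢ[ℝ] E))
    (hrefl : ∀ α ∈ Sig, ∀ x : E, refl α x = x - (2 * ⟪x, α⟫ / ⟪α, α⟫) • α)
    (hrefl_maps : ∀ α ∈ Sig, ∀ β ∈ Sig, refl α β ∈ Sig)
    (hcrys : ∀ α ∈ Sig, ∀ β ∈ Sig, ∃ m : ℤ, 2 * ⟪β, α⟫ / ⟪α, α⟫ = (m : ℝ))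
    -- the Weyl group `W`
    (W : Subgroup (E ≃ₗᵢ[ℝ] E))
    (hW : W = Subgroup.closure {g : E ≃ₗᵢ[ℝ] E | ∃ α ∈ Sig, g = refl α})
    -- the simple roots `α₁, …, α_ℓ`
    {l : ℕ} (a : Fin l → E)
    (ha_mem : ∀ i, a i ∈ Sig)
    (ha_indep : LinearIndependent ℝ a)
    (ha_span : Submodule.span ℝ (Set.range a) = ⊤)
    -- integer coefficients of roots w.r.t. the simple roots, all `≥ 0` or all `≤ 0`
    (coeff : E → Fin l → ℤ)
    (hcoeff : ∀ α ∈ Sig, α = ∑ i, (coeff α i : ℝ) • a i ∧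
        ((∀ i, 0 ≤ coeff α i) ∨ (∀ i, coeff α i ≤ 0)))
    -- the positive roots `Σ⁺`
    (Sigplus : Finset E)
    (hSigplus : ∀ α : E, α ∈ Sigplus ↔ α ∈ Sig ∧ ∀ i, 0 ≤ coeff α i)
    (hSig_nonempty : Sig.Nonempty)
    (hW_fin : (W : Set (E ≃ₗᵢ[ℝ] E)).Finite)
    (Aξ Aη : E)
    (hη : ∀ α ∈ Sigplus, 0 < ⟪α, -Aη⟫) :
    ∀ H₀ : E, (∀ α ∈ Sigplus, 0 < ⟪α, H₀⟫) →
      ∀ C : ℝ, ∃ t : ℝ, 0 < t ∧ C <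
        ‖∑ s ∈ hW_fin.toFinset,
            ((LinearMap.det (s.toLinearEquiv : E →ₗ[ℝ] E) : ℝ) : ℂ) *
              Complex.exp (Complex.I * ((t * ⟪s Aξ, H₀⟫ : ℝ) : ℂ) - ((t * ⟪s Aη, H₀⟫ : ℝ) : ℂ))‖ :=
  regular_case_unbounded_general Sig hSig_ne hSig_span refl hrefl hrefl_maps W hW a ha_mem ha_indep
    coeff hcoeff Sigplus hSigplus hSig_nonempty hW_fin Aξ Aη hη
end
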